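/- arXiv:2103.11109 — 3 statements merged into one kernel-verified Lean document; each statement's English description precedes it below -/
import Mathlib

section
/- Let f be a function with ℓ₂-sensitivity s (i.e., ‖f(D) - f(D')‖₂ ≤ s for all neighboring D, D'). Then the Gaussian mechanism G_σ f(D) = f(D) + N(0, σ² I) satisfies (λ, s²λ/(2σ²))-Rényi differential privacy for every λ > 1. -/
open MeasureTheory ProbabilityTheory NNReal

open scoped ENNReal

/-- `(λ, α)`-Rényi differential privacy. -/
def RDP {D Ω : Type*} [MeasurableSpace Ω] (M : D → Measure Ω)
    (Nbr : D → D → Prop) (lam α : ℝ) : Prop :=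
  ∀ d d', Nbr d d' →
    (1 / (lam - 1)) *
      Real.log (∫ x, ((M d).rnDeriv (M d') x).toReal ^ (lam - 1) ∂(M d)) ≤ α

lemma lintegral_fin_pi_prod {α : Type*} [MeasurableSpace α] : ∀ {n : ℕ}
    (μ : Fin n → Measure α) [∀ i, SigmaFinite (μ i)]
    (g : Fin n → α → ℝ≥0∞) (_ : ∀ i, Measurable (g i)),
    ∫⁻ x, ∏ i, g i (x i) ∂(Measure.pi μ) = ∏ i, ∫⁻ x, g i x ∂(μ i) := by
  intro n
  induction n with
  | zero => intro μ _ g hg; simp [lintegral_const, Measure.pi_univ]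
  | succ n ih =>
    intro μ _ g hg
    have h := measurePreserving_piFinSuccAbove μ 0
    have hmeas : Measurable (fun p : α × (Fin n → α) =>
        g 0 p.1 * ∏ j : Fin n, g (Fin.succAbove 0 j) (p.2 j)) := by
      refine ((hg 0).comp measurable_fst).mul ?_
      exact Finset.measurable_prod _ fun j _ =>
        (hg _).comp ((measurable_pi_apply j).comp measurable_snd)
    calc ∫⁻ x, ∏ i, g i (x i) ∂(Measure.pi μ)
        = ∫⁻ p : α × (Fin n → α), g 0 p.1 * ∏ j : Fin n, g (Fin.succAbove 0 j) (p.2 j)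
            ∂((μ 0).prod (Measure.pi fun j => μ (Fin.succAbove 0 j))) := by
          rw [← h.lintegral_comp hmeas]
          congr 1
          funext x
          simp only [MeasurableEquiv.piFinSuccAbove, MeasurableEquiv.coe_mk,
            Fin.insertNthEquiv, Equiv.coe_fn_symm_mk]
          rw [Fin.prod_univ_succAbove (fun i => g i (x i)) 0]
          simp [Fin.zero_succAbove, Fin.tail]
      _ = (∫⁻ x, g 0 x ∂(μ 0)) *
            ∏ j : Fin n, ∫⁻ x, g (Fin.succAbove 0 j) x ∂(μ (Fin.succAbove 0 j)) := by
          have hmeas2 : Measurable (fun y : Fin n → α =>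
              ∏ j : Fin n, g (Fin.succAbove 0 j) (y j)) :=
            Finset.measurable_prod Finset.univ fun j _ =>
              (hg _).comp (measurable_pi_apply j)
          have key := lintegral_prod_mul (μ := μ 0)
            (ν := Measure.pi fun j => μ (Fin.succAbove 0 j)) (f := g 0)
            (g := fun y : Fin n → α => ∏ j : Fin n, g (Fin.succAbove 0 j) (y j))
            (hg 0).aemeasurable hmeas2.aemeasurable
          rw [key, ih _ _ fun j => hg _]
      _ = ∏ i, ∫⁻ x, g i x ∂(μ i) :=
          (Fin.prod_univ_succAbove (fun i => ∫⁻ x, g i x ∂(μ i)) 0).symm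

lemma pi_withDensity_fin {α : Type*} [MeasurableSpace α] {n : ℕ}
    (μ : Fin n → Measure α) [∀ i, SigmaFinite (μ i)]
    (g : Fin n → α → ℝ≥0∞) (hg : ∀ i, Measurable (g i))
    [∀ i, SigmaFinite ((μ i).withDensity (g i))] :
    Measure.pi (fun i => (μ i).withDensity (g i))
      = (Measure.pi μ).withDensity (fun x => ∏ i, g i (x i)) := by
  refine Measure.pi_eq fun s hs => ?_
  rw [withDensity_apply _ (MeasurableSet.univ_pi hs),
    ← lintegral_indicator (MeasurableSet.univ_pi hs)]
  have hind : ∀ x, (Set.univ.pi s).indicator (fun x => ∏ i, g i (x i)) x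
      = ∏ i, (s i).indicator (g i) (x i) := by
    intro x
    by_cases hx : x ∈ Set.univ.pi s
    · rw [Set.indicator_of_mem hx]
      exact Finset.prod_congr rfl fun i _ =>
        (Set.indicator_of_mem (hx i (Set.mem_univ i)) _).symm
    · rw [Set.indicator_of_notMem hx]
      obtain ⟨i, hi⟩ : ∃ i, x i ∉ s i := by simpa [Set.mem_pi] using hx
      exact (Finset.prod_eq_zero (Finset.mem_univ i)
        (by simp [Set.indicator_of_notMem hi])).symm
  simp_rw [hind]
  rw [lintegral_fin_pi_prod μ _ fun i => (hg i).indicator (hs i)]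
  exact Finset.prod_congr rfl fun i _ => by
    rw [lintegral_indicator (hs i), withDensity_apply _ (hs i)]

/-- The Gaussian mechanism `G_σ f(D) = f(D) + N(0, σ² I)` applied to a function
`f` of ℓ₂-sensitivity `s` satisfies `(λ, s²λ/(2σ²))`-RDP for every `λ > 1`. -/
theorem gaussian_mechanism_rdp {D : Type*} {n : ℕ} (Nbr : D → D → Prop)
    (f : D → EuclideanSpace ℝ (Fin n)) (s : ℝ) (σ : ℝ≥0) (hσ : 0 < σ)
    (hs : ∀ d d', Nbr d d' → ‖f d - f d'‖ ≤ s) (lam : ℝ) (hlam : 1 < lam) :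
    RDP (fun d => Measure.pi fun i : Fin n => gaussianReal (f d i) (σ ^ 2))
      Nbr lam (s ^ 2 * lam / (2 * (σ : ℝ) ^ 2)) := by
  intro d d' hdd'
  dsimp only
  set v : ℝ≥0 := σ ^ 2 with hvdef
  have hv0 : v ≠ 0 := pow_ne_zero 2 hσ.ne'
  have hσR : (0:ℝ) < (σ:ℝ) := hσ
  have hvR : (0:ℝ) < (v:ℝ) := by rw [hvdef]; push_cast; positivity
  set a : Fin n → ℝ := fun i => f d i with ha
  set b : Fin n → ℝ := fun i => f d' i with hb
  set u : Fin n → ℝ → ℝ :=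
    fun i x => ((x - b i)^2 - (x - a i)^2) / (2*(v:ℝ)) with hu
  have hu_meas : ∀ i, Measurable fun x => Real.exp (u i x) := by
    intro i
    exact ((((measurable_id.sub_const (b i)).pow_const 2).sub
      ((measurable_id.sub_const (a i)).pow_const 2)).div_const _).exp
  -- pointwise density identity
  have hpdf : ∀ (i : Fin n) (x : ℝ), gaussianPDFReal (a i) v x
      = Real.exp (u i x) * gaussianPDFReal (b i) v x := by
    intro i x
    have hexp : -(x - a i)^2/(2*(v:ℝ)) = u i x + (-(x - b i)^2/(2*(v:ℝ))) := by
      simp only [hu]; ring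
    simp only [gaussianPDFReal, hexp, Real.exp_add]
    ring
  have h2 : ∀ i, gaussianReal (a i) v
      = (gaussianReal (b i) v).withDensity
          (fun x => ENNReal.ofReal (Real.exp (u i x))) := by
    intro i
    rw [gaussianReal_of_var_ne_zero _ hv0, gaussianReal_of_var_ne_zero _ hv0,
      ← withDensity_mul _ (measurable_gaussianPDF _ _) (hu_meas i).ennreal_ofReal]
    congr 1
    funext x
    simp only [Pi.mul_apply, gaussianPDF]
    rw [← ENNReal.ofReal_mul (gaussianPDFReal_nonneg _ _ _), hpdf i x, mul_comm]
  haveI hsf : ∀ i, SigmaFinite ((gaussianReal (b i) v).withDensity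
      (fun x => ENNReal.ofReal (Real.exp (u i x)))) := fun i => by
    rw [← h2 i]; infer_instance
  have hRmeas : Measurable fun x : Fin n → ℝ =>
      ∏ i, ENNReal.ofReal (Real.exp (u i (x i))) :=
    Finset.measurable_prod _ fun i _ =>
      ((hu_meas i).comp (measurable_pi_apply i)).ennreal_ofReal
  have hMd : (Measure.pi fun i => gaussianReal (a i) v)
      = (Measure.pi fun i => gaussianReal (b i) v).withDensity
          (fun x => ∏ i, ENNReal.ofReal (Real.exp (u i (x i)))) := by
    have he : (fun i => gaussianReal (a i) v)
        = fun i => (gaussianReal (b i) v).withDensity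
            (fun x => ENNReal.ofReal (Real.exp (u i x))) := funext h2
    rw [he, pi_withDensity_fin _ _ fun i => (hu_meas i).ennreal_ofReal]
  have hrn : (Measure.pi fun i => gaussianReal (a i) v).rnDeriv
        (Measure.pi fun i => gaussianReal (b i) v)
      =ᵐ[Measure.pi fun i => gaussianReal (b i) v]
        fun x => ∏ i, ENNReal.ofReal (Real.exp (u i (x i))) := by
    rw [hMd]; exact Measure.rnDeriv_withDensity _ hRmeas
  have hac : (Measure.pi fun i => gaussianReal (a i) v)
      ≪ (Measure.pi fun i => gaussianReal (b i) v) := by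
    rw [hMd]; exact withDensity_absolutelyContinuous _ _
  have hrn' : (Measure.pi fun i => gaussianReal (a i) v).rnDeriv
        (Measure.pi fun i => gaussianReal (b i) v)
      =ᵐ[Measure.pi fun i => gaussianReal (a i) v]
        fun x => ∏ i, ENNReal.ofReal (Real.exp (u i (x i))) :=
    hrn.filter_mono hac.ae_le
  -- the measure as a density over Lebesgue
  haveI hsf2 : ∀ i : Fin n, SigmaFinite
      ((volume : Measure ℝ).withDensity (gaussianPDF (a i) v)) := fun i => by
    rw [← gaussianReal_of_var_ne_zero _ hv0]; infer_instance
  have hMdV : (Measure.pi fun i => gaussianReal (a i) v)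
      = (volume : Measure (Fin n → ℝ)).withDensity
          (fun x => ∏ i, gaussianPDF (a i) v (x i)) := by
    have he : (fun i => gaussianReal (a i) v)
        = fun i : Fin n => (volume : Measure ℝ).withDensity (gaussianPDF (a i) v) :=
      funext fun i => gaussianReal_of_var_ne_zero _ hv0
    rw [he, pi_withDensity_fin _ _ fun i => measurable_gaussianPDF _ _, ← volume_pi]
  have hP : (fun x : Fin n → ℝ => ∏ i, gaussianPDF (a i) v (x i))
      = fun x => ((Real.toNNReal (∏ i, gaussianPDFReal (a i) v (x i)) : ℝ≥0) : ℝ≥0∞) := by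
    funext x
    simp only [gaussianPDF]
    rw [← ENNReal.ofReal_prod_of_nonneg fun i _ => gaussianPDFReal_nonneg _ _ _]
    rfl
  have hPmeas : Measurable fun x : Fin n → ℝ =>
      Real.toNNReal (∏ i, gaussianPDFReal (a i) v (x i)) :=
    (Finset.measurable_prod _ fun i _ =>
      (measurable_gaussianPDFReal _ _).comp (measurable_pi_apply i)).real_toNNReal
  -- the main integral computation
  have hint : (∫ x, ((Measure.pi fun i => gaussianReal (a i) v).rnDeriv
        (Measure.pi fun i => gaussianReal (b i) v) x).toReal ^ (lam - 1)
        ∂(Measure.pi fun i => gaussianReal (a i) v))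
      = Real.exp (lam * (lam - 1) * (∑ i, (a i - b i)^2) / (2*(v:ℝ))) := by
    have step1 : (∫ x, ((Measure.pi fun i => gaussianReal (a i) v).rnDeriv
          (Measure.pi fun i => gaussianReal (b i) v) x).toReal ^ (lam - 1)
          ∂(Measure.pi fun i => gaussianReal (a i) v))
        = ∫ x, ∏ i, Real.exp (u i (x i) * (lam - 1))
            ∂(Measure.pi fun i => gaussianReal (a i) v) := by
      refine integral_congr_ae (hrn'.mono fun x hx => ?_)
      dsimp only
      rw [hx]
      have htr : (∏ i, ENNReal.ofReal (Real.exp (u i (x i)))).toReal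
          = Real.exp (∑ i, u i (x i)) := by
        rw [ENNReal.toReal_prod, Real.exp_sum]
        exact Finset.prod_congr rfl fun i _ => ENNReal.toReal_ofReal (Real.exp_nonneg _)
      rw [htr, ← Real.exp_mul, Finset.sum_mul, Real.exp_sum]
    rw [step1, hMdV, hP, integral_withDensity_eq_integral_smul hPmeas]
    have step2 : ∀ x : Fin n → ℝ,
        (Real.toNNReal (∏ i, gaussianPDFReal (a i) v (x i)))
          • (∏ i, Real.exp (u i (x i) * (lam - 1)))
        = ∏ i, (gaussianPDFReal (a i) v (x i) * Real.exp (u i (x i) * (lam - 1))) := by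
      intro x
      rw [NNReal.smul_def, smul_eq_mul,
        Real.coe_toNNReal _ (Finset.prod_nonneg fun i _ => gaussianPDFReal_nonneg _ _ _),
        ← Finset.prod_mul_distrib]
    simp_rw [step2]
    rw [volume_pi, MeasureTheory.integral_fintype_prod_eq_prod
      (fun i x => gaussianPDFReal (a i) v x * Real.exp (u i x * (lam - 1)))]
    have hcoord : ∀ i : Fin n,
        (∫ x, gaussianPDFReal (a i) v x * Real.exp (u i x * (lam - 1)))
        = Real.exp (lam * (lam - 1) * (a i - b i)^2 / (2*(v:ℝ))) := by
      intro i
      have hid : ∀ x, gaussianPDFReal (a i) v x * Real.exp (u i x * (lam - 1))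
          = Real.exp (lam * (lam - 1) * (a i - b i)^2 / (2*(v:ℝ)))
            * gaussianPDFReal (lam * a i - (lam - 1) * b i) v x := by
        intro x
        have key : u i x * (lam - 1) + (-(x - a i)^2/(2*(v:ℝ)))
            = lam * (lam - 1) * (a i - b i)^2 / (2*(v:ℝ))
              + (-(x - (lam * a i - (lam - 1) * b i))^2/(2*(v:ℝ))) := by
          simp only [hu]
          field_simp
          ring
        simp only [gaussianPDFReal]
        rw [mul_assoc, ← Real.exp_add, add_comm (-(x - a i)^2/(2*(v:ℝ))) _, key,
          Real.exp_add]
        ring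
      simp_rw [hid]
      rw [MeasureTheory.integral_const_mul, integral_gaussianPDFReal_eq_one _ hv0, mul_one]
    rw [Finset.prod_congr rfl fun i _ => hcoord i, ← Real.exp_sum, ← Finset.sum_div,
      ← Finset.mul_sum]
  rw [hint, Real.log_exp]
  -- the sensitivity bound
  have hnorm := hs d d' hdd'
  have hs0 : (0:ℝ) ≤ s := le_trans (norm_nonneg _) hnorm
  have hSsum : (∑ i, (a i - b i)^2) = ‖f d - f d'‖^2 := by
    rw [EuclideanSpace.norm_eq,
      Real.sq_sqrt (Finset.sum_nonneg fun i _ => sq_nonneg _)]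
    refine Finset.sum_congr rfl fun i _ => ?_
    simp [ha, hb, Real.norm_eq_abs, sq_abs]
  have hS : (∑ i, (a i - b i)^2) ≤ s^2 := by
    rw [hSsum]
    exact pow_le_pow_left₀ (norm_nonneg _) hnorm 2
  have hlam0 : (0:ℝ) < lam - 1 := by linarith
  have h1 : 1/(lam-1) * (lam * (lam-1) * (∑ i, (a i - b i)^2) / (2*(v:ℝ)))
      = lam * (∑ i, (a i - b i)^2) / (2*(v:ℝ)) := by
    field_simp
  rw [h1]
  have hv2 : (2 * (σ:ℝ)^2) = 2*(v:ℝ) := by rw [hvdef]; push_cast; ring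
  rw [hv2]
  rw [div_le_div_iff_of_pos_right (by positivity)]
  nlinarith [hS, hlam.le, Finset.sum_nonneg (fun i (_ : i ∈ Finset.univ) => sq_nonneg (a i - b i))]
end

section
/- Let ∇f(x) ∈ ℝᵈ, and gₙ(x) ∈ ℝᵈ for n ∈ [N] satisfy (1/N)Σₙ ‖gₙ(x)‖² ≤ M² and (1/N)Σₙ |gₙ(x)_i - ∇f(x)_i|² ≤ σᵢ² for each coordinate i. For each i let A_i ⊆ [N]. Then (1/N) Σᵢ Σ_{n∈A_i} |∇f(x)_i| · |gₙ(x)_i - ∇f(x)_i| ≤ ‖σ‖² + ‖σ‖·M, where ‖σ‖ = (Σᵢ σᵢ²)^{1/2}. -/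
open Finset

lemma cs {α : Type*} (s : Finset α) (f g : α → ℝ) :
    ∑ i ∈ s, f i * g i ≤ Real.sqrt (∑ i ∈ s, f i ^ 2) * Real.sqrt (∑ i ∈ s, g i ^ 2) := by
  have h := Finset.sum_mul_sq_le_sq_mul_sq s f g
  calc ∑ i ∈ s, f i * g i ≤ |∑ i ∈ s, f i * g i| := le_abs_self _
    _ = Real.sqrt ((∑ i ∈ s, f i * g i) ^ 2) := (Real.sqrt_sq_eq_abs _).symm
    _ ≤ Real.sqrt ((∑ i ∈ s, f i ^ 2) * ∑ i ∈ s, g i ^ 2) := Real.sqrt_le_sqrt h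
    _ = _ := Real.sqrt_mul (Finset.sum_nonneg fun i _ => sq_nonneg _) _

lemma sum_sqrt_le {α : Type*} (s : Finset α) (a : α → ℝ) (ha : ∀ i ∈ s, 0 ≤ a i) :
    ∑ i ∈ s, Real.sqrt (a i) ≤ Real.sqrt (s.card) * Real.sqrt (∑ i ∈ s, a i) := by
  have h := cs s (fun _ => 1) (fun i => Real.sqrt (a i))
  simp only [one_mul, one_pow, Finset.sum_const, nsmul_eq_mul, mul_one] at h
  calc ∑ i ∈ s, Real.sqrt (a i) ≤ Real.sqrt s.card * Real.sqrt (∑ i ∈ s, Real.sqrt (a i) ^ 2) := h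
    _ = _ := by
        congr 2
        exact Finset.sum_congr rfl fun i hi => Real.sq_sqrt (ha i hi)

/-- Bound on the clipped-gradient error term `err(GD₂)`: if
`(1/N) Σₙ ‖gₙ‖² ≤ M²` and per coordinate `(1/N) Σₙ |gₙᵢ - ∇fᵢ|² ≤ σᵢ²`, then
for any choices of subsets `Aᵢ ⊆ [N]`,
`(1/N) Σᵢ Σ_{n ∈ Aᵢ} |∇fᵢ| |gₙᵢ - ∇fᵢ| ≤ ‖σ‖² + ‖σ‖ M` where `‖σ‖ = √(Σᵢ σᵢ²)`. -/
theorem errGD2_bound (d N : ℕ) (hN : 0 < N)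
    (grad : Fin d → ℝ) (G : Fin N → Fin d → ℝ) (σ : Fin d → ℝ) (M : ℝ)
    (hσ : ∀ i, 0 ≤ σ i) (hM : 0 ≤ M)
    (hnorm : (1 / (N : ℝ)) * ∑ n, ∑ i, (G n i) ^ 2 ≤ M ^ 2)
    (hvar : ∀ i, (1 / (N : ℝ)) * ∑ n, |G n i - grad i| ^ 2 ≤ (σ i) ^ 2)
    (A : Fin d → Finset (Fin N)) :
    (1 / (N : ℝ)) * ∑ i, ∑ n ∈ A i, |grad i| * |G n i - grad i|
      ≤ (∑ i, (σ i) ^ 2) + Real.sqrt (∑ i, (σ i) ^ 2) * M := by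
  have hNr : (0 : ℝ) < N := by exact_mod_cast hN
  set S := ∑ i, (σ i) ^ 2 with hS
  have hS0 : 0 ≤ S := Finset.sum_nonneg fun i _ => sq_nonneg _
  -- squared variance sums
  have hvar' : ∀ i, ∑ n, |G n i - grad i| ^ 2 ≤ N * σ i ^ 2 := by
    intro i
    have := hvar i
    rw [one_div, inv_mul_le_iff₀ hNr] at this
    linarith
  have hnorm' : ∑ n, ∑ i, (G n i) ^ 2 ≤ N * M ^ 2 := by
    rw [one_div, inv_mul_le_iff₀ hNr] at hnorm
    linarith
  -- Step 1 : per-coordinate ℓ¹ bound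
  have key1 : ∀ i, ∑ n, |G n i - grad i| ≤ N * σ i := by
    intro i
    have h := Finset.sum_mul_sq_le_sq_mul_sq Finset.univ (fun _ : Fin N => 1)
      (fun n => |G n i - grad i|)
    simp only [one_mul, one_pow, Finset.sum_const, Finset.card_univ, Fintype.card_fin,
      nsmul_eq_mul, mul_one, sq_abs] at h
    have h2 : (∑ n, |G n i - grad i|) ^ 2 ≤ ((N : ℝ) * σ i) ^ 2 := by
      calc (∑ n, |G n i - grad i|) ^ 2 ≤ (N : ℝ) * ∑ n, (G n i - grad i) ^ 2 := by
            have := h; simpa [sq_abs] using this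
        _ ≤ (N : ℝ) * ((N : ℝ) * σ i ^ 2) := by
            apply mul_le_mul_of_nonneg_left _ hNr.le
            simpa [sq_abs] using hvar' i
        _ = ((N : ℝ) * σ i) ^ 2 := by ring
    have hnn : 0 ≤ ∑ n, |G n i - grad i| := Finset.sum_nonneg fun n _ => abs_nonneg _
    have hnn2 : 0 ≤ (N : ℝ) * σ i := mul_nonneg hNr.le (hσ i)
    nlinarith
  -- Step 2 : triangle inequality on |grad i|
  have key2 : ∀ i, (N : ℝ) * |grad i| ≤ ∑ n, (|G n i - grad i| + |G n i|) := by
    intro i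
    have : ∀ n : Fin N, |grad i| ≤ |G n i - grad i| + |G n i| := by
      intro n
      calc |grad i| = |G n i - (G n i - grad i)| := by ring_nf
        _ ≤ |G n i| + |G n i - grad i| := abs_sub _ _
        _ = _ := by ring
    calc (N : ℝ) * |grad i| = ∑ _n : Fin N, |grad i| := by
          simp [Finset.sum_const, mul_comm]
      _ ≤ _ := Finset.sum_le_sum fun n _ => this n
  -- main chain
  have step1 : (1 / (N : ℝ)) * ∑ i, ∑ n ∈ A i, |grad i| * |G n i - grad i|
      ≤ ∑ i, σ i * |grad i| := by
    rw [one_div, inv_mul_le_iff₀ hNr, mul_comm, Finset.sum_mul]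
    apply Finset.sum_le_sum
    intro i _
    calc ∑ n ∈ A i, |grad i| * |G n i - grad i|
        ≤ ∑ n, |grad i| * |G n i - grad i| :=
          Finset.sum_le_sum_of_subset_of_nonneg (Finset.subset_univ _)
            (fun n _ _ => mul_nonneg (abs_nonneg _) (abs_nonneg _))
      _ = |grad i| * ∑ n, |G n i - grad i| := by rw [Finset.mul_sum]
      _ ≤ |grad i| * ((N : ℝ) * σ i) :=
          mul_le_mul_of_nonneg_left (key1 i) (abs_nonneg _)
      _ = σ i * |grad i| * N := by ring
  have step2 : ∑ i, σ i * |grad i|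
      ≤ (1 / (N : ℝ)) * ∑ n, ((∑ i, σ i * |G n i - grad i|) + ∑ i, σ i * |G n i|) := by
    rw [one_div, le_inv_mul_iff₀ hNr]
    calc (N : ℝ) * ∑ i, σ i * |grad i| = ∑ i, σ i * ((N : ℝ) * |grad i|) := by
          rw [Finset.mul_sum]; exact Finset.sum_congr rfl fun i _ => by ring
      _ ≤ ∑ i, σ i * ∑ n, (|G n i - grad i| + |G n i|) :=
          Finset.sum_le_sum fun i _ => mul_le_mul_of_nonneg_left (key2 i) (hσ i)
      _ = ∑ n, ((∑ i, σ i * |G n i - grad i|) + ∑ i, σ i * |G n i|) := by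
          simp only [Finset.mul_sum]
          rw [Finset.sum_comm]
          exact Finset.sum_congr rfl fun n _ => by
            rw [← Finset.sum_add_distrib]
            exact Finset.sum_congr rfl fun i _ => by ring
  -- per-sample Cauchy-Schwarz in i
  have csΔ : ∀ n, ∑ i, σ i * |G n i - grad i|
      ≤ Real.sqrt S * Real.sqrt (∑ i, (G n i - grad i) ^ 2) := by
    intro n
    have h := cs Finset.univ σ (fun i => |G n i - grad i|)
    simpa [sq_abs, hS] using h
  have csG : ∀ n, ∑ i, σ i * |G n i|
      ≤ Real.sqrt S * Real.sqrt (∑ i, (G n i) ^ 2) := by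
    intro n
    have h := cs Finset.univ σ (fun i => |G n i|)
    simpa [sq_abs, hS] using h
  -- averaging over n
  have avgΔ : ∑ n, Real.sqrt (∑ i, (G n i - grad i) ^ 2) ≤ (N : ℝ) * Real.sqrt S := by
    have h := sum_sqrt_le Finset.univ (fun n : Fin N => ∑ i, (G n i - grad i) ^ 2)
      (fun n _ => Finset.sum_nonneg fun i _ => sq_nonneg _)
    simp only [Finset.card_univ, Fintype.card_fin] at h
    have h2 : ∑ n, ∑ i, (G n i - grad i) ^ 2 ≤ (N : ℝ) * S := by
      rw [Finset.sum_comm, hS, Finset.mul_sum]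
      exact Finset.sum_le_sum fun i _ => by simpa [sq_abs] using hvar' i
    calc ∑ n, Real.sqrt (∑ i, (G n i - grad i) ^ 2)
        ≤ Real.sqrt N * Real.sqrt (∑ n, ∑ i, (G n i - grad i) ^ 2) := h
      _ ≤ Real.sqrt N * Real.sqrt ((N : ℝ) * S) :=
          mul_le_mul_of_nonneg_left (Real.sqrt_le_sqrt h2) (Real.sqrt_nonneg _)
      _ = (N : ℝ) * Real.sqrt S := by
          rw [Real.sqrt_mul hNr.le, ← mul_assoc, Real.mul_self_sqrt hNr.le]
  have avgG : ∑ n, Real.sqrt (∑ i, (G n i) ^ 2) ≤ (N : ℝ) * M := by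
    have h := sum_sqrt_le Finset.univ (fun n : Fin N => ∑ i, (G n i) ^ 2)
      (fun n _ => Finset.sum_nonneg fun i _ => sq_nonneg _)
    simp only [Finset.card_univ, Fintype.card_fin] at h
    calc ∑ n, Real.sqrt (∑ i, (G n i) ^ 2)
        ≤ Real.sqrt N * Real.sqrt (∑ n, ∑ i, (G n i) ^ 2) := h
      _ ≤ Real.sqrt N * Real.sqrt ((N : ℝ) * M ^ 2) :=
          mul_le_mul_of_nonneg_left (Real.sqrt_le_sqrt hnorm') (Real.sqrt_nonneg _)
      _ = (N : ℝ) * M := by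
          rw [Real.sqrt_mul hNr.le, Real.sqrt_sq hM, ← mul_assoc,
            Real.mul_self_sqrt hNr.le]
  -- combine everything
  have step3 : (1 / (N : ℝ)) * ∑ n, ((∑ i, σ i * |G n i - grad i|) + ∑ i, σ i * |G n i|)
      ≤ S + Real.sqrt S * M := by
    rw [one_div, inv_mul_le_iff₀ hNr]
    calc ∑ n, ((∑ i, σ i * |G n i - grad i|) + ∑ i, σ i * |G n i|)
        ≤ ∑ n, (Real.sqrt S * Real.sqrt (∑ i, (G n i - grad i) ^ 2)
            + Real.sqrt S * Real.sqrt (∑ i, (G n i) ^ 2)) :=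
          Finset.sum_le_sum fun n _ => add_le_add (csΔ n) (csG n)
      _ = Real.sqrt S * (∑ n, Real.sqrt (∑ i, (G n i - grad i) ^ 2))
            + Real.sqrt S * (∑ n, Real.sqrt (∑ i, (G n i) ^ 2)) := by
          rw [Finset.sum_add_distrib, Finset.mul_sum, Finset.mul_sum]
      _ ≤ Real.sqrt S * ((N : ℝ) * Real.sqrt S) + Real.sqrt S * ((N : ℝ) * M) :=
          add_le_add (mul_le_mul_of_nonneg_left avgΔ (Real.sqrt_nonneg _))
            (mul_le_mul_of_nonneg_left avgG (Real.sqrt_nonneg _))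
      _ = (N : ℝ) * (S + Real.sqrt S * M) := by
          have : Real.sqrt S * Real.sqrt S = S := Real.mul_self_sqrt hS0
          nlinarith [this]
  exact le_trans step1 (le_trans step2 step3)
end

section
/- Let d ≥ 1. For each i ∈ [d] let h_i ≥ 0 (playing the role of |∇f(x)_i|) and let a_i, b_i ∈ [0,1] with a_i + b_i = 1 (fractions |A_i|/N and |B_i|/N). Let α = 1/(d+2). Suppose both (1-α) Σᵢ hᵢ < Σᵢ hᵢ bᵢ and (1-α) Σᵢ hᵢ² < Σᵢ hᵢ² aᵢ hold. Define A = {i : a_i ≥ 1-α} and B = {i : b_i ≥ 1-α}. Then both dα·max_{i∈B} hᵢ ≥ (1-2α)·max_{i∈A} hᵢ and dα·max_{i∈A} hᵢ² > ((1-2α)³/(dα)²)·max_{i∈A} hᵢ² follow, yielding a contradiction; hence at least one of the two suppositions fails. -/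
open Finset

/-- The dichotomy at the heart of Claim 1 of the convergence proof: with
`α = 1/(d+2)`, nonnegative weights `hᵢ`, and fractions `aᵢ + bᵢ = 1`, the
clipped-gradient error and the signed-gradient error cannot simultaneously
exceed `(1-α)` times their respective main terms — at least one of the two
suppositions fails. -/
theorem clipping_dichotomy (d : ℕ) (hd : 1 ≤ d)
    (h a b : Fin d → ℝ)
    (hh : ∀ i, 0 ≤ h i)
    (ha : ∀ i, a i ∈ Set.Icc (0 : ℝ) 1) (hb : ∀ i, b i ∈ Set.Icc (0 : ℝ) 1)
    (hab : ∀ i, a i + b i = 1) :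
    ¬ ((1 - 1 / ((d : ℝ) + 2)) * ∑ i, h i < ∑ i, h i * b i ∧
       (1 - 1 / ((d : ℝ) + 2)) * ∑ i, (h i) ^ 2 < ∑ i, (h i) ^ 2 * a i) := by
  rintro ⟨h1, h2⟩
  set α : ℝ := 1 / ((d : ℝ) + 2) with hα
  have hd2 : (0 : ℝ) < (d : ℝ) + 2 := by positivity
  have hα0 : 0 < α := by positivity
  have hα2 : α * ((d : ℝ) + 2) = 1 := by
    rw [hα]; field_simp
  -- rewrite hypothesis 1: ∑ h a < α ∑ h
  have hsplit : ∑ i, h i * b i = (∑ i, h i) - ∑ i, h i * a i := by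
    rw [← Finset.sum_sub_distrib]
    refine Finset.sum_congr rfl fun i _ => ?_
    have hbi : b i = 1 - a i := by linarith [hab i]
    rw [hbi]; ring
  have hSa : ∑ i, h i * a i < α * ∑ i, h i := by
    rw [hsplit] at h1; linarith
  -- pick a maximizer of h
  have hne : (Finset.univ : Finset (Fin d)).Nonempty := by
    exact ⟨⟨0, hd⟩, Finset.mem_univ _⟩
  obtain ⟨j, -, hj⟩ := Finset.exists_max_image Finset.univ h hne
  set H : ℝ := h j with hH
  have hjle : ∀ i, h i ≤ H := fun i => hj i (Finset.mem_univ i)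
  have hH0 : 0 ≤ H := hh j
  -- H > 0 (else everything is 0 and h1 fails)
  have hHpos : 0 < H := by
    rcases lt_or_eq_of_le hH0 with hp | hp
    · exact hp
    · exfalso
      have hz : ∀ i, h i = 0 := fun i => le_antisymm (hp ▸ hjle i) (hh i)
      have hS0 : ∑ i, h i = 0 := Finset.sum_eq_zero fun i _ => hz i
      have hSb0 : ∑ i, h i * b i = 0 := Finset.sum_eq_zero fun i _ => by rw [hz i]; ring
      rw [hS0, hSb0] at h1
      simp at h1
  -- ∑ h² ≥ H²
  have hQ : H ^ 2 ≤ ∑ i, (h i) ^ 2 := by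
    have := Finset.single_le_sum (f := fun i => (h i) ^ 2)
      (fun i _ => sq_nonneg (h i)) (Finset.mem_univ j)
    simpa using this
  -- ∑ h ≤ d * H
  have hS : ∑ i, h i ≤ (d : ℝ) * H := by
    calc ∑ i, h i ≤ ∑ _i : Fin d, H := Finset.sum_le_sum fun i _ => hjle i
    _ = (d : ℝ) * H := by simp [mul_comm]
  -- ∑ h² a ≤ H * ∑ h a
  have h2a : ∑ i, (h i) ^ 2 * a i ≤ H * ∑ i, h i * a i := by
    rw [Finset.mul_sum]
    refine Finset.sum_le_sum fun i _ => ?_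
    have hai := (ha i).1
    nlinarith [mul_nonneg (hh i) (mul_nonneg (sub_nonneg.mpr (hjle i)) hai)]
  -- ∑ h a ≥ 0
  have hSa0 : 0 ≤ ∑ i, h i * a i :=
    Finset.sum_nonneg fun i _ => mul_nonneg (hh i) (ha i).1
  -- chain everything
  have hchain : (1 - α) * H ^ 2 < α * (d : ℝ) * H ^ 2 := by
    have e1 : (1 - α) * H ^ 2 ≤ (1 - α) * ∑ i, (h i) ^ 2 := by
      have : 0 ≤ 1 - α := by nlinarith
      nlinarith
    have e2 : H * ∑ i, h i * a i < H * (α * ∑ i, h i) :=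
      mul_lt_mul_of_pos_left hSa hHpos
    have e3 : H * (α * ∑ i, h i) ≤ H * (α * ((d : ℝ) * H)) := by
      have : α * ∑ i, h i ≤ α * ((d : ℝ) * H) := by nlinarith
      nlinarith
    nlinarith
  nlinarith [mul_pos hHpos hHpos, sq_nonneg H]
end
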